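/- arXiv:1810.08905 — 3 statements merged into one kernel-verified Lean document; each statement's English description precedes it below -/
import Mathlib

section
/- Let P be a polynomial of degree at most n with all coefficients in {−1, 0, 1}, and let λ be an algebraic number of degree d. If P(λ) ≠ 0, then |P(λ)| ≥ M(λ)^{−n} (n+1)^{1−d}. -/
/-!
Let `z₁ = λ, z₂, …, z_d` be the complex roots of the minimal polynomial `p` of `λ`, with leading
coefficient `a`. The number `aⁿ ∏ⱼ P(zⱼ)` is the resultant of `p` and `P` (with `P` read as a
polynomial of formal degree `n`), hence an integer, and it is nonzero because an irreducible `p`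
shares no root with `P` once `P(λ) ≠ 0`. So `1 ≤ |a|ⁿ ∏ⱼ |P(zⱼ)|`. For `j ≥ 2` bound
`|P(zⱼ)| ≤ (n + 1) max(1, |zⱼ|)ⁿ`, and use `|a| ∏_{j ≥ 2} max(1, |zⱼ|) ≤ M(λ)`:
this leaves `1 ≤ |P(λ)| (n + 1)^(d - 1) M(λ)ⁿ`.
-/

/-- The Mahler measure of an integer polynomial `p = a_d (x - z_1) ⋯ (x - z_d)`:
`|a_d| * ∏_{j : |z_j| > 1} |z_j|`, the roots being taken in `ℂ` with multiplicity. -/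
noncomputable def mahlerMeasure (p : Polynomial ℤ) : ℝ :=
  |(p.leadingCoeff : ℝ)| *
    (((p.map (Int.castRingHom ℂ)).roots.filter fun z => 1 < ‖z‖).map (fun z : ℂ => ‖z‖)).prod

open Polynomial

lemma norm_aeval_le_of_abs_coeff_le_one {P : ℤ[X]} {n : ℕ} (hcoeff : ∀ i, |P.coeff i| ≤ 1)
    (hdeg : P.natDegree ≤ n) (z : ℂ) : ‖aeval z P‖ ≤ (n + 1) * max 1 ‖z‖ ^ n := by
  rw [aeval_eq_sum_range' (Nat.lt_succ_of_le hdeg)]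
  calc ‖∑ i ∈ Finset.range (n + 1), P.coeff i • z ^ i‖
      ≤ ∑ i ∈ Finset.range (n + 1), ‖P.coeff i • z ^ i‖ := norm_sum_le _ _
    _ ≤ ∑ _i ∈ Finset.range (n + 1), max 1 ‖z‖ ^ n := by
        refine Finset.sum_le_sum fun i hi => ?_
        rw [zsmul_eq_mul, norm_mul, norm_pow, Complex.norm_intCast]
        calc |(P.coeff i : ℝ)| * ‖z‖ ^ i ≤ 1 * max 1 ‖z‖ ^ n := by
              gcongr ?_ * ?_
              · exact_mod_cast hcoeff i
              · exact (pow_le_pow_left₀ (norm_nonneg z) (le_max_right _ _) i).trans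
                  (pow_le_pow_right₀ (le_max_left _ _) (Finset.mem_range_succ_iff.mp hi))
          _ = max 1 ‖z‖ ^ n := one_mul _
    _ = (n + 1) * max 1 ‖z‖ ^ n := by simp

lemma prod_norm_aeval_le_of_abs_coeff_le_one {P : ℤ[X]} {n : ℕ} (hcoeff : ∀ i, |P.coeff i| ≤ 1)
    (hdeg : P.natDegree ≤ n) (s : Multiset ℂ) :
    (s.map fun z => ‖aeval z P‖).prod ≤
      (n + 1) ^ Multiset.card s * (s.map fun z => max 1 ‖z‖).prod ^ n := by
  calc (s.map fun z => ‖aeval z P‖).prod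
      ≤ (s.map fun z => (n + 1 : ℝ) * max 1 ‖z‖ ^ n).prod :=
        Multiset.prod_map_le_prod_map₀ _ _ (fun _ _ => norm_nonneg _)
          fun z _ => norm_aeval_le_of_abs_coeff_le_one hcoeff hdeg z
    _ = (n + 1) ^ Multiset.card s * (s.map fun z => max 1 ‖z‖).prod ^ n := by
        rw [Multiset.prod_map_mul, Multiset.prod_map_pow, Multiset.map_const',
          Multiset.prod_replicate]

lemma mahlerMeasure_eq_mahlerMeasure_map (p : ℤ[X]) :
    mahlerMeasure p = (p.map (Int.castRingHom ℂ)).mahlerMeasure := by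
  rw [Polynomial.mahlerMeasure_eq_leadingCoeff_mul_prod_roots,
    leadingCoeff_map_of_injective (RingHom.injective_int _), _root_.mahlerMeasure]
  congr 1
  · simp
  · induction (p.map (Int.castRingHom ℂ)).roots using Multiset.induction_on with
    | empty => simp
    | cons z s ih =>
      by_cases hz : 1 < ‖z‖
      · rw [Multiset.filter_cons_of_pos (p := fun z : ℂ => 1 < ‖z‖) s hz, Multiset.map_cons,
          Multiset.prod_cons, ih, Multiset.map_cons, Multiset.prod_cons, max_eq_right hz.le]
      · rw [Multiset.filter_cons_of_neg (p := fun z : ℂ => 1 < ‖z‖) s hz, ih, Multiset.map_cons,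
          Multiset.prod_cons, max_eq_left (not_lt.mp hz), one_mul]

lemma one_le_prod_max_one_norm (s : Multiset ℂ) : 1 ≤ (s.map fun z => max 1 ‖z‖).prod :=
  Multiset.one_le_prod fun _ hx => by
    obtain ⟨z, -, rfl⟩ := Multiset.mem_map.mp hx
    exact le_max_left _ _

lemma norm_leadingCoeff_mul_prod_erase_le_mahlerMeasure {q : ℂ[X]} {l : ℂ} (hl : l ∈ q.roots) :
    ‖q.leadingCoeff‖ * ((q.roots.erase l).map fun z => max 1 ‖z‖).prod ≤ q.mahlerMeasure := by
  rw [q.mahlerMeasure_eq_leadingCoeff_mul_prod_roots, ← Multiset.prod_map_erase hl]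
  gcongr
  exact le_mul_of_one_le_left (zero_le_one.trans (one_le_prod_max_one_norm _)) (le_max_left _ _)

lemma intCast_resultant_eq_leadingCoeff_pow_mul_prod_aeval (p P : ℤ[X]) {n : ℕ}
    (hP : P.natDegree ≤ n) :
    ((resultant p P p.natDegree n : ℤ) : ℂ) =
      (p.leadingCoeff : ℂ) ^ n *
        ((p.map (Int.castRingHom ℂ)).roots.map fun z => aeval z P).prod := by
  have := resultant_eq_prod_eval (p.map (Int.castRingHom ℂ)) (P.map (Int.castRingHom ℂ)) n
    (natDegree_map_le.trans hP) (IsAlgClosed.splits _)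
  rw [natDegree_map_eq_of_injective (RingHom.injective_int _), resultant_map_map,
    leadingCoeff_map_of_injective (RingHom.injective_int _)] at this
  simp only [eq_intCast] at this
  simp only [this, aeval_def, algebraMap_int_eq, eval_map]

lemma aeval_eq_zero_of_irreducible {K : Type*} [Field K] [CharZero K] {p P : ℤ[X]}
    (hp : Irreducible p) {x y : K} (hx : aeval x p = 0) (hy : aeval y p = 0)
    (hPx : aeval x P = 0) : aeval y P = 0 := by
  have hdeg : p.natDegree ≠ 0 :=
    (natDegree_pos_of_aeval_root hp.ne_zero hx fun _ h => by simpa using h).ne'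
  have hirr : Irreducible (p.map (algebraMap ℤ ℚ)) :=
    (hp.isPrimitive hdeg).irreducible_iff_irreducible_map_fraction_map.mp hp
  have hminpoly : minpoly ℚ x = minpoly ℚ y := by
    rw [← minpoly.eq_of_irreducible hirr (by rwa [aeval_map_algebraMap]),
      ← minpoly.eq_of_irreducible hirr (by rwa [aeval_map_algebraMap])]
  rw [← aeval_map_algebraMap ℚ] at hPx ⊢
  exact aeval_eq_zero_of_dvd_aeval_eq_zero (hminpoly ▸ minpoly.dvd ℚ x hPx) (minpoly.aeval ℚ y)

lemma one_le_abs_leadingCoeff_pow_mul_prod_norm_aeval {p P : ℤ[X]} {n : ℕ} (hp : p ≠ 0)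
    (hP : P.natDegree ≤ n) (hne : ∀ z ∈ (p.map (Int.castRingHom ℂ)).roots, aeval z P ≠ 0) :
    1 ≤ |(p.leadingCoeff : ℝ)| ^ n *
      ((p.map (Int.castRingHom ℂ)).roots.map fun z => ‖aeval z P‖).prod := by
  have hres := intCast_resultant_eq_leadingCoeff_pow_mul_prod_aeval p P hP
  have hres0 : resultant p P p.natDegree n ≠ 0 := by
    rintro h
    rw [h, Int.cast_zero, eq_comm] at hres
    refine mul_ne_zero (pow_ne_zero _ ?_) (Multiset.prod_ne_zero fun h0 => ?_) hres
    · exact_mod_cast leadingCoeff_ne_zero.mpr hp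
    · obtain ⟨z, hz, hPz⟩ := Multiset.mem_map.mp h0
      exact hne z hz hPz
  calc (1 : ℝ) ≤ |((resultant p P p.natDegree n : ℤ) : ℝ)| := mod_cast Int.one_le_abs hres0
    _ = ‖((resultant p P p.natDegree n : ℤ) : ℂ)‖ := (Complex.norm_intCast _).symm
    _ = _ := by
        rw [hres, norm_mul, norm_pow, Complex.norm_intCast]
        congr 1
        simpa [Multiset.map_map] using map_multiset_prod (normHom : ℂ →*₀ ℝ)
          ((p.map (Int.castRingHom ℂ)).roots.map fun z => aeval z P)

lemma one_le_norm_aeval_mul_pow_mul_mahlerMeasure_pow {p P : ℤ[X]} {l : ℂ} {n : ℕ}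
    (hp : Irreducible p) (hpl : aeval l p = 0) (hcoeff : ∀ i, |P.coeff i| ≤ 1)
    (hP : P.natDegree ≤ n) (hPl : aeval l P ≠ 0) :
    1 ≤ ‖aeval l P‖ * ((n + 1) ^ (p.natDegree - 1) * mahlerMeasure p ^ n) := by
  set q := p.map (Int.castRingHom ℂ)
  have hroot : ∀ z, z ∈ q.roots ↔ aeval z p = 0 := fun z =>
    (mem_roots_map_of_injective (RingHom.injective_int _) hp.ne_zero).trans
      (by rw [← algebraMap_int_eq, aeval_def])
  have hl : l ∈ q.roots := (hroot l).mpr hpl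
  have hcard : Multiset.card (q.roots.erase l) = p.natDegree - 1 := by
    rw [Multiset.card_erase_of_mem hl, ← (IsAlgClosed.splits q).natDegree_eq_card_roots,
      natDegree_map_eq_of_injective (RingHom.injective_int _)]
    rfl
  have hconj : ∀ z ∈ q.roots, aeval z P ≠ 0 := fun z hz hPz =>
    hPl (aeval_eq_zero_of_irreducible hp ((hroot z).mp hz) hpl hPz)
  have hM := norm_leadingCoeff_mul_prod_erase_le_mahlerMeasure hl
  rw [leadingCoeff_map_of_injective (RingHom.injective_int _), eq_intCast,
    Complex.norm_intCast, ← mahlerMeasure_eq_mahlerMeasure_map] at hM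
  set a : ℝ := |(p.leadingCoeff : ℝ)|
  set G := ((q.roots.erase l).map fun z => max 1 ‖z‖).prod
  calc 1 ≤ a ^ n * (q.roots.map fun z => ‖aeval z P‖).prod :=
        one_le_abs_leadingCoeff_pow_mul_prod_norm_aeval hp.ne_zero hP hconj
    _ = ‖aeval l P‖ * (a ^ n * ((q.roots.erase l).map fun z => ‖aeval z P‖).prod) := by
        rw [← Multiset.prod_map_erase hl]
        ring
    _ ≤ ‖aeval l P‖ * (a ^ n * ((n + 1) ^ (p.natDegree - 1) * G ^ n)) := by
        rw [← hcard]
        gcongr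
        exact prod_norm_aeval_le_of_abs_coeff_le_one hcoeff hP _
    _ = ‖aeval l P‖ * ((n + 1) ^ (p.natDegree - 1) * (a * G) ^ n) := by ring
    _ ≤ ‖aeval l P‖ * ((n + 1) ^ (p.natDegree - 1) * mahlerMeasure p ^ n) := by
        gcongr
        exact mul_nonneg (abs_nonneg _) (zero_le_one.trans (one_le_prod_max_one_norm _))

theorem garsia_lower_bound_general (l : ℂ) (d n : ℕ) (p : Polynomial ℤ)
    (hp_irr : Irreducible p) (hp_root : Polynomial.aeval l p = 0)
    (hp_deg : p.natDegree = d)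
    (P : Polynomial ℤ) (hP_coeff : ∀ i, P.coeff i ∈ ({-1, 0, 1} : Set ℤ))
    (hP_deg : P.natDegree ≤ n) (hP_ne : Polynomial.aeval l P ≠ 0) :
    mahlerMeasure p ^ (-(n : ℝ)) * ((n : ℝ) + 1) ^ (1 - (d : ℝ)) ≤
      ‖Polynomial.aeval l P‖ := by
  have hcoeff : ∀ i, |P.coeff i| ≤ 1 := fun i => by
    obtain h | h | h : P.coeff i = -1 ∨ P.coeff i = 0 ∨ P.coeff i = 1 := hP_coeff i <;> simp [h]
  have key := one_le_norm_aeval_mul_pow_mul_mahlerMeasure_pow hp_irr hp_root hcoeff hP_deg hP_ne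
  have hM : 0 < mahlerMeasure p := by
    rw [mahlerMeasure_eq_mahlerMeasure_map]
    exact mahlerMeasure_pos_of_ne_zero
      ((Polynomial.map_ne_zero_iff (RingHom.injective_int _)).mpr hp_irr.ne_zero)
  have hd : 1 - (d : ℝ) = -((d - 1 : ℕ) : ℝ) := by
    have : 1 ≤ d :=
      hp_deg ▸ natDegree_pos_of_aeval_root hp_irr.ne_zero hp_root fun _ h => by simpa using h
    push_cast [this]
    ring
  rw [hd, Real.rpow_neg hM.le, Real.rpow_neg (by positivity), Real.rpow_natCast,
    Real.rpow_natCast, ← mul_inv, inv_le_iff_one_le_mul₀ (by positivity), ← hp_deg]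
  linarith

/-- Garsia's lemma: if `P` has degree at most `n` and coefficients in `{-1, 0, 1}`, and `l` is an
algebraic number of degree `d` (with minimal polynomial `p` over `ℤ`, irreducible with positive
leading coefficient), then `P(l) ≠ 0` implies `|P(l)| ≥ M(l) ^ (-n) * (n+1) ^ (1-d)`. -/
theorem garsia_lower_bound (l : ℂ) (d n : ℕ) (p : Polynomial ℤ)
    (hp_irr : Irreducible p) (hp_root : Polynomial.aeval l p = 0)
    (hp_lead : 0 < p.leadingCoeff) (hp_deg : p.natDegree = d)
    (P : Polynomial ℤ) (hP_coeff : ∀ i, P.coeff i ∈ ({-1, 0, 1} : Set ℤ))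
    (hP_deg : P.natDegree ≤ n) (hP_ne : Polynomial.aeval l P ≠ 0) :
    mahlerMeasure p ^ (-(n : ℝ)) * ((n : ℝ) + 1) ^ (1 - (d : ℝ)) ≤
      ‖Polynomial.aeval l P‖ :=
  garsia_lower_bound_general l d n p hp_irr hp_root hp_deg P hP_coeff hP_deg hP_ne
end

section
/- There is an absolute constant δ > 0 such that [0, 2^{−2/3}] is an interval of δ-transversality for 𝒫, and [0, 2^{−1/2}] is an interval of δ-transversality for 𝒫_1 and for 𝒫_2. -/
/-!
For `f = 1 + ∑ aₙ xⁿ` in the family and any `k ≥ 0`,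
`x f'(x) - k f(x) = ∑ (n - k) aₙ xⁿ ≤ -k + ∑_{n ∈ A} |n - k| xⁿ`,
and for `x ≥ 0` the right-hand side is increasing in `x`. If at `x₀` it is at most
`-(k + 1) δ`, then on `[0, x₀]` the condition `f(x) < δ` forces `x f'(x) ≤ -δ`, hence
`f'(x) < -δ` as `x < 1`. The bound at `x₀` is an explicit computation: sum the first `N ≥ k`
terms exactly and bound the tail by `∑_{n ≥ N} (n - k) x₀ⁿ`. With `δ = 1/100`, the choice
`k = 4, N = 6` works for `𝒫` and `𝒫₁`, and `k = 6, N = 16` for `𝒫₂`.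
-/

/-- `powerSeriesFamily A` is the set of functions on `ℝ` given by power series of the form
`1 + ∑_{n ∈ A} a_n * x ^ n` with coefficients `a_n ∈ {-1, 0, 1}`. -/
def powerSeriesFamily (A : Set ℕ) : Set (ℝ → ℝ) :=
  {f | ∃ c : ℕ → ℝ, c 0 = 1 ∧ (∀ n, n ≠ 0 → c n ∈ ({-1, 0, 1} : Set ℝ)) ∧
    (∀ n, n ≠ 0 → n ∉ A → c n = 0) ∧ ∀ x : ℝ, f x = ∑' n : ℕ, c n * x ^ n}

/-- `[0, x₀]` is an interval of `δ`-transversality for `powerSeriesFamily A`: for every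
`x ∈ [0, x₀]` and every `f` in the family, `f x < δ` implies `deriv f x < -δ`. -/
def IsTransversalityInterval (A : Set ℕ) (δ x₀ : ℝ) : Prop :=
  ∀ f ∈ powerSeriesFamily A, ∀ x ∈ Set.Icc (0 : ℝ) x₀, f x < δ → deriv f x < -δ

open Finset

theorem summable_mul_pow_of_abs_le_linear {c : ℕ → ℝ} {a b x : ℝ}
    (hc : ∀ n, |c n| ≤ a * n + b) (hx : |x| < 1) : Summable fun n ↦ c n * x ^ n := by
  have hgeom : Summable fun n : ℕ ↦ |x| ^ n := summable_geometric_of_lt_one (abs_nonneg x) hx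
  have harith : Summable fun n : ℕ ↦ (n : ℝ) * |x| ^ n := by
    simpa using summable_pow_mul_geometric_of_norm_lt_one (R := ℝ) 1 (r := |x|) (by simpa)
  refine .of_norm_bounded ((harith.mul_left a).add (hgeom.mul_left b)) fun n ↦ ?_
  rw [norm_mul, norm_pow, Real.norm_eq_abs, Real.norm_eq_abs]
  calc |c n| * |x| ^ n ≤ (a * n + b) * |x| ^ n := by gcongr; exact hc n
    _ = _ := by ring

theorem hasDerivAt_tsum_mul_pow {c : ℕ → ℝ} (hc : ∀ n, |c n| ≤ 1) {x : ℝ} (hx : |x| < 1) :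
    HasDerivAt (fun t ↦ ∑' n, c n * t ^ n) (∑' n, c n * (n * x ^ (n - 1))) x := by
  obtain ⟨r, hxr, hr⟩ := exists_between hx
  have hr0 : 0 ≤ r := (abs_nonneg x).trans hxr.le
  have hbound : Summable fun n : ℕ ↦ (n : ℝ) * r ^ (n - 1) := by
    rw [← summable_nat_add_iff 1]
    simpa using summable_mul_pow_of_abs_le_linear (c := fun n : ℕ ↦ (n : ℝ) + 1)
      (a := 1) (b := 1) (fun n ↦ by rw [abs_of_nonneg (by positivity)]; simp)
      (by rwa [abs_of_nonneg hr0])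
  have hball : ∀ t ∈ Metric.ball (0 : ℝ) r, |t| ≤ r := fun t ht ↦ by
    simpa using (Metric.mem_ball.mp ht).le
  refine hasDerivAt_tsum_of_isPreconnected (t := Metric.ball 0 r) hbound Metric.isOpen_ball
    (convex_ball 0 r).isPreconnected (fun n t _ ↦ (hasDerivAt_pow n t).const_mul (c n))
    (fun n t ht ↦ ?_) (by simpa using hxr)
    (summable_mul_pow_of_abs_le_linear (a := 0) (by simpa using hc) hx) (by simpa using hxr)
  rw [norm_mul, norm_mul, norm_pow, Real.norm_eq_abs, Real.norm_eq_abs, Real.norm_eq_abs,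
    Nat.abs_cast]
  calc |c n| * (n * |t| ^ (n - 1)) ≤ 1 * (n * r ^ (n - 1)) := by
        gcongr
        exacts [hc n, hball t ht]
    _ = n * r ^ (n - 1) := one_mul _

theorem mul_deriv_tsum_mul_pow {c : ℕ → ℝ} (hc : ∀ n, |c n| ≤ 1) {x : ℝ} (hx : |x| < 1) :
    x * deriv (fun t ↦ ∑' n, c n * t ^ n) x = ∑' n, n * c n * x ^ n := by
  rw [(hasDerivAt_tsum_mul_pow hc hx).deriv, ← tsum_mul_left]
  congr 1 with (_ | n)
  · simp
  · simp only [Nat.add_sub_cancel, pow_succ]; push_cast; ring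

theorem tsum_add_const_mul_geometric {y : ℝ} (a : ℝ) (hy : |y| < 1) :
    ∑' i : ℕ, (i + a) * y ^ i = y / (1 - y) ^ 2 + a / (1 - y) := by
  have hy' : ‖y‖ < 1 := by simpa using hy
  simp_rw [add_mul]
  rw [Summable.tsum_add (summable_pow_mul_geometric_of_norm_lt_one 1 hy' |>.congr (by simp))
    ((summable_geometric_of_norm_lt_one hy').mul_left a),
    tsum_coe_mul_geometric_of_norm_lt_one hy', tsum_mul_left, tsum_geometric_of_norm_lt_one hy',
    div_eq_mul_inv a]

theorem abs_le_one_of_mem_neg_one_zero_one {c : ℕ → ℝ} (h0 : c 0 = 1)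
    (h : ∀ n, n ≠ 0 → c n ∈ ({-1, 0, 1} : Set ℝ)) (n : ℕ) : |c n| ≤ 1 := by
  rcases eq_or_ne n 0 with rfl | hn
  · simp [h0]
  · rcases h n hn with hc | hc | hc <;> simp_all

theorem apply_zero_of_mem_powerSeriesFamily {A : Set ℕ} {f : ℝ → ℝ}
    (hf : f ∈ powerSeriesFamily A) : f 0 = 1 := by
  obtain ⟨c, hc0, -, -, hfc⟩ := hf
  rw [hfc, tsum_eq_single 0 fun n hn ↦ by simp [hn]]
  simp [hc0]

open Classical in
noncomputable def majorantCoeff (A : Set ℕ) (k n : ℕ) : ℝ :=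
  if n = 0 then -k else if n ∈ A then |(n : ℝ) - k| else 0

section Majorant

variable {A : Set ℕ} {k : ℕ}

theorem abs_majorantCoeff_le (n : ℕ) : |majorantCoeff A k n| ≤ n + k := by
  unfold majorantCoeff
  split_ifs
  · simp
  · exact (abs_abs _).trans_le ((abs_sub _ _).trans (by simp))
  · simp; positivity

theorem majorantCoeff_nonneg {n : ℕ} (hn : n ≠ 0) : 0 ≤ majorantCoeff A k n := by
  unfold majorantCoeff
  split_ifs <;> first | positivity | omega

theorem majorantCoeff_le_sub {n : ℕ} (hkn : k ≤ n) : majorantCoeff A k n ≤ n - k := by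
  have hkn' : (k : ℝ) ≤ n := by exact_mod_cast hkn
  unfold majorantCoeff
  split_ifs with h0
  · simp_all
  · rw [abs_of_nonneg (by linarith)]
  · linarith

theorem summable_majorantCoeff_mul_pow {x : ℝ} (hx : |x| < 1) :
    Summable fun n ↦ majorantCoeff A k n * x ^ n :=
  summable_mul_pow_of_abs_le_linear (a := 1) (fun n ↦ by simpa using abs_majorantCoeff_le n) hx

theorem mul_pow_sub_le_majorantCoeff_mul_pow {c : ℕ → ℝ} (hc0 : c 0 = 1)
    (hc : ∀ n, |c n| ≤ 1) (hcA : ∀ n, n ≠ 0 → n ∉ A → c n = 0) {x : ℝ} (hx : 0 ≤ x) (n : ℕ) :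
    n * c n * x ^ n - k * (c n * x ^ n) ≤ majorantCoeff A k n * x ^ n := by
  rw [← mul_assoc, ← sub_mul]
  unfold majorantCoeff
  split_ifs with h0 hA
  · simp [h0, hc0]
  · gcongr
    calc n * c n - k * c n = (n - k) * c n := by ring
      _ ≤ |(n - k) * c n| := le_abs_self _
      _ = |(n : ℝ) - k| * |c n| := abs_mul _ _
      _ ≤ |(n : ℝ) - k| := mul_le_of_le_one_right (abs_nonneg _) (hc n)
  · simp [hcA n h0 hA]

theorem mul_deriv_sub_mul_le_tsum_majorantCoeff {f : ℝ → ℝ} (hf : f ∈ powerSeriesFamily A)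
    {x : ℝ} (hx0 : 0 ≤ x) (hx1 : x < 1) :
    x * deriv f x - k * f x ≤ ∑' n, majorantCoeff A k n * x ^ n := by
  obtain ⟨c, hc0, hc, hcA, hfc⟩ := hf
  have hc1 := abs_le_one_of_mem_neg_one_zero_one hc0 hc
  have hx : |x| < 1 := by rwa [abs_of_nonneg hx0]
  obtain rfl : f = fun t ↦ ∑' n, c n * t ^ n := funext hfc
  have hsum : Summable fun n ↦ c n * x ^ n :=
    summable_mul_pow_of_abs_le_linear (a := 0) (by simpa using hc1) hx
  have hsum' : Summable fun n ↦ n * c n * x ^ n :=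
    summable_mul_pow_of_abs_le_linear (a := 1) (b := 0) (fun n ↦ by
      rw [abs_mul, Nat.abs_cast]; simpa using mul_le_of_le_one_right n.cast_nonneg (hc1 n)) hx
  rw [mul_deriv_tsum_mul_pow hc1 hx, ← tsum_mul_left, ← hsum'.tsum_sub (hsum.mul_left _)]
  exact (hsum'.sub (hsum.mul_left _)).tsum_le_tsum
    (mul_pow_sub_le_majorantCoeff_mul_pow hc0 hc1 hcA hx0) (summable_majorantCoeff_mul_pow hx)

theorem tsum_majorantCoeff_mono {x y : ℝ} (hx : 0 ≤ x) (hxy : x ≤ y) (hy : y < 1) :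
    ∑' n, majorantCoeff A k n * x ^ n ≤ ∑' n, majorantCoeff A k n * y ^ n := by
  refine (summable_majorantCoeff_mul_pow (by rw [abs_of_nonneg hx]; linarith)).tsum_le_tsum
    (fun n ↦ ?_) (summable_majorantCoeff_mul_pow (by rw [abs_of_nonneg (hx.trans hxy)]; exact hy))
  rcases eq_or_ne n 0 with rfl | hn
  · simp
  · exact mul_le_mul_of_nonneg_left (pow_le_pow_left₀ hx hxy n) (majorantCoeff_nonneg hn)

theorem tsum_majorantCoeff_le {N : ℕ} (hkN : k ≤ N) {y : ℝ} (hy0 : 0 ≤ y) (hy1 : y < 1) :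
    ∑' n, majorantCoeff A k n * y ^ n ≤ ∑ n ∈ range N, majorantCoeff A k n * y ^ n
      + y ^ N * (y / (1 - y) ^ 2 + (N - k) / (1 - y)) := by
  have hy : |y| < 1 := by rwa [abs_of_nonneg hy0]
  rw [← (summable_majorantCoeff_mul_pow hy).sum_add_tsum_nat_add N, add_le_add_iff_left,
    ← tsum_add_const_mul_geometric _ hy, ← tsum_mul_left]
  refine ((summable_nat_add_iff N).mpr (summable_majorantCoeff_mul_pow hy)).tsum_le_tsum
    (fun i ↦ ?_)
    ((summable_mul_pow_of_abs_le_linear (a := 1) (b := N - k) (fun i ↦ ?_) hy).mul_left _)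
  · calc majorantCoeff A k (i + N) * y ^ (i + N) ≤ (↑(i + N) - k) * y ^ (i + N) := by
          gcongr
          exact majorantCoeff_le_sub (by omega)
      _ = y ^ N * ((i + (N - k)) * y ^ i) := by push_cast; ring
  · have : (k : ℝ) ≤ N := by exact_mod_cast hkN
    rw [abs_of_nonneg (by positivity)]
    linarith

end Majorant

theorem isTransversalityInterval_of_tsum_majorantCoeff_le {A : Set ℕ} {k : ℕ} {δ y : ℝ}
    (hδ : 0 < δ) (hy : y < 1) (h : ∑' n, majorantCoeff A k n * y ^ n ≤ -(k + 1) * δ) :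
    IsTransversalityInterval A δ y := by
  intro f hf x ⟨hx0, hxy⟩ hfx
  have hxf' : x * deriv f x ≤ -δ := by
    have := mul_deriv_sub_mul_le_tsum_majorantCoeff (k := k) hf hx0 (hxy.trans_lt hy)
    have := tsum_majorantCoeff_mono (A := A) (k := k) hx0 hxy hy
    have : (k : ℝ) * f x ≤ k * δ := by gcongr
    linarith
  by_contra! hf'
  nlinarith [mul_le_mul_of_nonneg_left hf' hx0]

theorem isTransversalityInterval_of_sum_majorantCoeff_le {A : Set ℕ} {k N : ℕ} {δ y : ℝ}
    (hδ : 0 < δ) (hkN : k ≤ N) (hy0 : 0 ≤ y) (hy1 : y < 1)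
    (h : ∑ n ∈ range N, majorantCoeff A k n * y ^ n
      + y ^ N * (y / (1 - y) ^ 2 + (N - k) / (1 - y)) ≤ -(k + 1) * δ) :
    IsTransversalityInterval A δ y :=
  isTransversalityInterval_of_tsum_majorantCoeff_le hδ hy1
    ((tsum_majorantCoeff_le hkN hy0 hy1).trans h)

theorem isTransversalityInterval_of_cube_eq_quarter {y : ℝ} (hy0 : 0 < y) (hy : y ^ 3 = 1 / 4) :
    IsTransversalityInterval {n : ℕ | 0 < n} (1 / 100) y := by
  have hyhi : y < 0.63 := lt_of_pow_lt_pow_left₀ 3 (by norm_num) (by rw [hy]; norm_num)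
  have hylo : 0.6299 < y := lt_of_pow_lt_pow_left₀ 3 hy0.le (by rw [hy]; norm_num)
  refine isTransversalityInterval_of_sum_majorantCoeff_le (k := 4) (N := 6) (by norm_num)
    (by norm_num) hy0.le (by linarith) ?_
  have hsum : ∑ n ∈ range 6, majorantCoeff {n : ℕ | 0 < n} 4 n * y ^ n
      = -4 + 3 * y + 2 * y ^ 2 + y ^ 3 + y ^ 5 := by
    norm_num [majorantCoeff, sum_range_succ]
  have h5 : y ^ 5 = 1 / 4 * y ^ 2 := by rw [← hy]; ring
  have h6 : y ^ 6 = 1 / 16 := by rw [show y ^ 6 = (y ^ 3) ^ 2 by ring, hy]; norm_num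
  have hd1 : y / (1 - y) ^ 2 ≤ 4.7 := by
    rw [div_le_iff₀ (by nlinarith)]
    nlinarith
  have hd2 : 2 / (1 - y) ≤ 5.5 := by
    rw [div_le_iff₀ (by linarith)]
    linarith
  rw [hsum, h5, hy, h6]
  push_cast
  nlinarith

theorem bounds_of_sq_eq_half {y : ℝ} (hy0 : 0 < y) (hy : y ^ 2 = 1 / 2) :
    0.7071 < y ∧ y < 0.70711 :=
  ⟨lt_of_pow_lt_pow_left₀ 2 hy0.le (by rw [hy]; norm_num),
    lt_of_pow_lt_pow_left₀ 2 (by norm_num) (by rw [hy]; norm_num)⟩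

theorem isTransversalityInterval_residue_one_of_sq_eq_half {y : ℝ} (hy0 : 0 < y)
    (hy : y ^ 2 = 1 / 2) :
    IsTransversalityInterval {n : ℕ | 0 < n ∧ ¬(3 : ℤ) ∣ ((n : ℤ) - 1)} (1 / 100) y := by
  obtain ⟨hylo, hyhi⟩ := bounds_of_sq_eq_half hy0 hy
  refine isTransversalityInterval_of_sum_majorantCoeff_le (k := 4) (N := 6) (by norm_num)
    (by norm_num) hy0.le (by linarith) ?_
  have hsum :
      ∑ n ∈ range 6, majorantCoeff {n : ℕ | 0 < n ∧ ¬(3 : ℤ) ∣ ((n : ℤ) - 1)} 4 n * y ^ n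
        = -4 + 2 * y ^ 2 + y ^ 3 + y ^ 5 := by
    norm_num [majorantCoeff, sum_range_succ]
  have h3 : y ^ 3 = 1 / 2 * y := by rw [← hy]; ring
  have h5 : y ^ 5 = 1 / 4 * y := by rw [show y ^ 5 = y * (y ^ 2) ^ 2 by ring, hy]; ring
  have h6 : y ^ 6 = 1 / 8 := by rw [show y ^ 6 = (y ^ 2) ^ 3 by ring, hy]; norm_num
  have hd1 : y / (1 - y) ^ 2 ≤ 8.3 := by
    rw [div_le_iff₀ (by nlinarith)]
    nlinarith
  have hd2 : 2 / (1 - y) ≤ 6.9 := by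
    rw [div_le_iff₀ (by linarith)]
    linarith
  rw [hsum, h3, h5, h6, hy]
  push_cast
  linarith

theorem isTransversalityInterval_residue_two_of_sq_eq_half {y : ℝ} (hy0 : 0 < y)
    (hy : y ^ 2 = 1 / 2) :
    IsTransversalityInterval {n : ℕ | 0 < n ∧ ¬(3 : ℤ) ∣ ((n : ℤ) - 2)} (1 / 100) y := by
  obtain ⟨hylo, hyhi⟩ := bounds_of_sq_eq_half hy0 hy
  refine isTransversalityInterval_of_sum_majorantCoeff_le (k := 6) (N := 16) (by norm_num)
    (by norm_num) hy0.le (by linarith) ?_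
  have hsum :
      ∑ n ∈ range 16, majorantCoeff {n : ℕ | 0 < n ∧ ¬(3 : ℤ) ∣ ((n : ℤ) - 2)} 6 n * y ^ n
        = -6 + 5 * y + 3 * y ^ 3 + 2 * y ^ 4 + y ^ 7 + 3 * y ^ 9 + 4 * y ^ 10 + 6 * y ^ 12
          + 7 * y ^ 13 + 9 * y ^ 15 := by
    norm_num [majorantCoeff, sum_range_succ]
  have hodd : ∀ m : ℕ, y ^ (2 * m + 1) = (1 / 2) ^ m * y := fun m ↦ by
    rw [pow_succ, pow_mul, hy]
  have heven : ∀ m : ℕ, y ^ (2 * m) = (1 / 2) ^ m := fun m ↦ by rw [pow_mul, hy]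
  have hd1 : y / (1 - y) ^ 2 ≤ 8.3 := by
    rw [div_le_iff₀ (by nlinarith)]
    nlinarith
  have hd2 : 10 / (1 - y) ≤ 34.5 := by
    rw [div_le_iff₀ (by linarith)]
    linarith
  rw [hsum, hodd 1, heven 2, hodd 3, hodd 4, heven 5, heven 6, hodd 6, hodd 7, heven 8]
  push_cast
  norm_num
  linarith

/-- There is an absolute constant `δ > 0` such that `[0, 2 ^ (-2/3)]` is an interval of
`δ`-transversality for `𝒫 = 𝒫_{n > 0}`, and `[0, 2 ^ (-1/2)]` is an interval of
`δ`-transversality for `𝒫_i = 𝒫_{n > 0 : 3 ∤ n - i}`, `i = 1, 2`. -/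
theorem exists_transversality_constant :
    ∃ δ : ℝ, 0 < δ ∧
      IsTransversalityInterval {n : ℕ | 0 < n} δ ((2 : ℝ) ^ (-(2 / 3 : ℝ))) ∧
      IsTransversalityInterval {n : ℕ | 0 < n ∧ ¬(3 : ℤ) ∣ ((n : ℤ) - 1)} δ
        ((2 : ℝ) ^ (-(1 / 2 : ℝ))) ∧
      IsTransversalityInterval {n : ℕ | 0 < n ∧ ¬(3 : ℤ) ∣ ((n : ℤ) - 2)} δ
        ((2 : ℝ) ^ (-(1 / 2 : ℝ))) := by
  have hcube : ((2 : ℝ) ^ (-(2 / 3 : ℝ))) ^ 3 = 1 / 4 := by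
    rw [← Real.rpow_mul_natCast zero_le_two]
    norm_num
  have hsq : ((2 : ℝ) ^ (-(1 / 2 : ℝ))) ^ 2 = 1 / 2 := by
    rw [← Real.rpow_mul_natCast zero_le_two]
    norm_num
  have hpos (r : ℝ) : 0 < (2 : ℝ) ^ r := Real.rpow_pos_of_pos two_pos r
  exact ⟨1 / 100, by norm_num, isTransversalityInterval_of_cube_eq_quarter (hpos _) hcube,
    isTransversalityInterval_residue_one_of_sq_eq_half (hpos _) hsq,
    isTransversalityInterval_residue_two_of_sq_eq_half (hpos _) hsq⟩
end

section
/- For t > 0, let f_t : ℝ → ℝ be given by f_t(x) = (φ(x − t) + φ(x + t))/2, where φ(x) = (2π)^{−1/2} e^{−x²/2}, and let h(t) = −∫_ℝ f_t(x) log f_t(x) dx. Then lim_{t→∞} h(t) = log 2 + (1/2) log(2πe) and lim_{t→0^+} h(t) = (1/2) log(2πe). (Equivalently, the differential entropy of X₀t + G tends to log 2 + H(G) as t → ∞ and to H(G) as t → 0, where X₀ is a uniform ±1 random variable and G an independent standard Gaussian.) -/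
/-- The standard Gaussian density. -/
noncomputable def gaussDensity (x : ℝ) : ℝ := (2 * Real.pi) ^ (-(1 / 2 : ℝ)) * Real.exp (-x ^ 2 / 2)

/-- The density of `X₀ * t + G`, where `X₀` is a fair `±1` random variable and `G` an independent
standard Gaussian. -/
noncomputable def mixDensity (t x : ℝ) : ℝ := (gaussDensity (x - t) + gaussDensity (x + t)) / 2

/-- The differential entropy of `X₀ * t + G`. -/
noncomputable def mixEntropy (t : ℝ) : ℝ := -∫ x : ℝ, mixDensity t x * Real.log (mixDensity t x)

/-!
Shifting by `t`, `f_t (y + t) = φ y * (1 + exp (-2ty - 2t²)) / 2`, and since `f_t` is even its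
entropy is `h(t) = log 2 + H(G) - E[log (1 + exp (-2tG - 2t²))]`. The integrand is bounded by
`log 2 + G² / 2` uniformly in `t`, so by dominated convergence the expectation tends to `0` as
`t → ∞` and to `log 2` as `t → 0`.
-/

open Real MeasureTheory ProbabilityTheory Filter Topology

lemma gaussDensity_eq_gaussianPDFReal : gaussDensity = gaussianPDFReal 0 1 := by
  ext x
  rw [gaussDensity, gaussianPDFReal, Real.sqrt_eq_rpow, ← Real.rpow_neg (by positivity)]
  simp

lemma gaussDensity_pos (x : ℝ) : 0 < gaussDensity x :=
  gaussDensity_eq_gaussianPDFReal ▸ gaussianPDFReal_pos _ _ _ one_ne_zero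

lemma gaussDensity_neg (x : ℝ) : gaussDensity (-x) = gaussDensity x := by
  simp [gaussDensity]

lemma log_gaussDensity (x : ℝ) : log (gaussDensity x) = -(log (2 * π) / 2) - x ^ 2 / 2 := by
  rw [gaussDensity, log_mul (by positivity) (exp_ne_zero _), log_rpow (by positivity), log_exp]
  ring

lemma integral_gaussDensity_mul (g : ℝ → ℝ) :
    ∫ x, gaussDensity x * g x = ∫ x, g x ∂gaussianReal 0 1 := by
  rw [integral_gaussianReal_eq_integral_smul one_ne_zero, gaussDensity_eq_gaussianPDFReal]
  rfl

lemma integrable_gaussDensity_mul_iff {g : ℝ → ℝ} :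
    Integrable (fun x ↦ gaussDensity x * g x) ↔ Integrable g (gaussianReal 0 1) := by
  rw [gaussianReal_of_var_ne_zero _ one_ne_zero, integrable_withDensity_iff_integrable_smul'
    (measurable_gaussianPDF 0 1) (ae_of_all _ fun _ ↦ gaussianPDF_lt_top)]
  simp [gaussDensity_eq_gaussianPDFReal]

lemma integrable_sq_gaussianReal : Integrable (fun x ↦ x ^ 2) (gaussianReal 0 1) :=
  (memLp_id_gaussianReal 2).integrable_sq

lemma integral_sq_gaussianReal : ∫ x, x ^ 2 ∂gaussianReal 0 1 = 1 := by
  rw [← variance_of_integral_eq_zero measurable_id'.aemeasurable integral_id_gaussianReal]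
  simp

lemma integral_log_gaussDensity :
    ∫ x, log (gaussDensity x) ∂gaussianReal 0 1 = -(1 / 2 * log (2 * π * exp 1)) := by
  simp_rw [log_gaussDensity]
  rw [integral_sub (integrable_const _) (integrable_sq_gaussianReal.div_const 2), integral_const,
    integral_div, integral_sq_gaussianReal, log_mul (by positivity) (exp_ne_zero 1), log_exp]
  simp only [probReal_univ, smul_eq_mul, mul_neg, one_mul, one_div]
  ring

lemma mixDensity_neg (t x : ℝ) : mixDensity t (-x) = mixDensity t x := by
  rw [mixDensity, mixDensity, show -x - t = -(x + t) by ring, show -x + t = -(x - t) by ring,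
    gaussDensity_neg, gaussDensity_neg, add_comm]

lemma mixDensity_add_right (t y : ℝ) :
    mixDensity t (y + t) = gaussDensity y * (1 + exp (-(2 * t * y) - 2 * t ^ 2)) / 2 := by
  have hshift : gaussDensity (y + t + t) = gaussDensity y * exp (-(2 * t * y) - 2 * t ^ 2) := by
    rw [gaussDensity, gaussDensity, mul_assoc, ← exp_add]
    ring_nf
  rw [mixDensity, add_sub_cancel_right, hshift]
  ring

lemma log_mixDensity_add_right (t y : ℝ) :
    log (mixDensity t (y + t))
      = log (gaussDensity y) + log (1 + exp (-(2 * t * y) - 2 * t ^ 2)) - log 2 := by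
  rw [mixDensity_add_right, log_div (by positivity [gaussDensity_pos y]) two_ne_zero,
    log_mul (gaussDensity_pos y).ne' (by positivity)]

lemma integral_mixDensity_mul {g : ℝ → ℝ} (t : ℝ) (hg : ∀ x, g (-x) = g x)
    (hint : Integrable (fun y ↦ g (y + t)) (gaussianReal 0 1)) :
    ∫ x, mixDensity t x * g x = ∫ y, g (y + t) ∂gaussianReal 0 1 := by
  set v : ℝ → ℝ := fun x ↦ gaussDensity (x - t) * g x
  have hv : Integrable v := by
    simpa [v] using (integrable_gaussDensity_mul_iff.2 hint).comp_sub_right t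
  have hsymm : ∀ x, mixDensity t x * g x = (v x + v (-x)) / 2 := fun x ↦ by
    simp only [v, mixDensity, hg, show -x - t = -(x + t) by ring, gaussDensity_neg]
    ring
  calc ∫ x, mixDensity t x * g x = ∫ x, (v x + v (-x)) / 2 := by simp_rw [hsymm]
    _ = ∫ x, v x := by
      rw [integral_div, integral_add hv hv.comp_neg, integral_neg_eq_self]
      ring
    _ = ∫ y, v (y + t) := (integral_add_right_eq_self v t).symm
    _ = ∫ y, g (y + t) ∂gaussianReal 0 1 := by
      simpa [v] using integral_gaussDensity_mul fun y ↦ g (y + t)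

lemma log_one_add_exp_le (u : ℝ) : log (1 + exp u) ≤ log 2 + max u 0 := by
  have hle : 1 + exp u ≤ 2 * exp (max u 0) := by
    linarith [one_le_exp (le_max_right u 0), exp_le_exp.2 (le_max_left u 0)]
  calc log (1 + exp u) ≤ log (2 * exp (max u 0)) := log_le_log (by positivity) hle
    _ = log 2 + max u 0 := by rw [log_mul two_ne_zero (exp_ne_zero _), log_exp]

lemma norm_log_one_add_exp_le (t y : ℝ) :
    ‖log (1 + exp (-(2 * t * y) - 2 * t ^ 2))‖ ≤ log 2 + y ^ 2 / 2 := by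
  have hexp : -(2 * t * y) - 2 * t ^ 2 ≤ y ^ 2 / 2 := by nlinarith [sq_nonneg (2 * t + y)]
  rw [norm_of_nonneg (log_nonneg (by linarith [exp_pos (-(2 * t * y) - 2 * t ^ 2)]))]
  exact (log_one_add_exp_le _).trans (by gcongr; exact max_le hexp (by positivity))

lemma continuous_log_one_add_exp :
    Continuous fun p : ℝ × ℝ ↦ log (1 + exp (-(2 * p.1 * p.2) - 2 * p.1 ^ 2)) :=
  Continuous.log (by fun_prop) fun _ ↦ by positivity

lemma integrable_log_one_add_exp (t : ℝ) :
    Integrable (fun y ↦ log (1 + exp (-(2 * t * y) - 2 * t ^ 2))) (gaussianReal 0 1) :=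
  ((integrable_const _).add (integrable_sq_gaussianReal.div_const 2)).mono'
    (continuous_log_one_add_exp.comp (Continuous.prodMk_right t)).aestronglyMeasurable
    (ae_of_all _ (norm_log_one_add_exp_le t))

noncomputable def mixEntropyDeficit (t : ℝ) : ℝ :=
  ∫ y, log (1 + exp (-(2 * t * y) - 2 * t ^ 2)) ∂gaussianReal 0 1

lemma mixEntropy_eq (t : ℝ) :
    mixEntropy t = log 2 + 1 / 2 * log (2 * π * exp 1) - mixEntropyDeficit t := by
  have hlogφ : Integrable (fun y ↦ log (gaussDensity y)) (gaussianReal 0 1) := by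
    simp_rw [log_gaussDensity]
    exact (integrable_const _).sub (integrable_sq_gaussianReal.div_const 2)
  have hsum : Integrable (fun y ↦ log (gaussDensity y) + log (1 + exp (-(2 * t * y) - 2 * t ^ 2)))
      (gaussianReal 0 1) := hlogφ.add (integrable_log_one_add_exp t)
  have hint : Integrable (fun y ↦ log (mixDensity t (y + t))) (gaussianReal 0 1) := by
    simp_rw [log_mixDensity_add_right]
    exact hsum.sub (integrable_const _)
  rw [mixEntropy, integral_mixDensity_mul t (fun x ↦ by rw [mixDensity_neg]) hint]
  simp_rw [log_mixDensity_add_right]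
  rw [integral_sub hsum (integrable_const _), integral_add hlogφ (integrable_log_one_add_exp t),
    integral_log_gaussDensity, integral_const, mixEntropyDeficit]
  simp only [one_div, probReal_univ, smul_eq_mul, one_mul, neg_sub]
  ring

lemma tendsto_mixEntropyDeficit {l : Filter ℝ} [l.IsCountablyGenerated] {g : ℝ → ℝ}
    (hg : ∀ y, Tendsto (fun t ↦ log (1 + exp (-(2 * t * y) - 2 * t ^ 2))) l (𝓝 (g y))) :
    Tendsto mixEntropyDeficit l (𝓝 (∫ y, g y ∂gaussianReal 0 1)) :=
  tendsto_integral_filter_of_dominated_convergence _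
    (Eventually.of_forall fun t ↦
      (continuous_log_one_add_exp.comp (Continuous.prodMk_right t)).aestronglyMeasurable)
    (Eventually.of_forall fun t ↦ ae_of_all _ (norm_log_one_add_exp_le t))
    ((integrable_const _).add (integrable_sq_gaussianReal.div_const 2)) (ae_of_all _ hg)

lemma tendsto_mixEntropyDeficit_atTop : Tendsto mixEntropyDeficit atTop (𝓝 0) := by
  simpa using tendsto_mixEntropyDeficit (l := atTop) (g := 0) fun y ↦ by
    have hexp : Tendsto (fun t ↦ -(2 * t * y) - 2 * t ^ 2) atTop atBot := by
      have : Tendsto (fun t ↦ t * (t + y)) atTop atTop :=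
        tendsto_id.atTop_mul_atTop₀ (tendsto_atTop_add_const_right _ y tendsto_id)
      refine (tendsto_neg_atTop_atBot.comp (this.const_mul_atTop two_pos)).congr fun t ↦ ?_
      simp only [Function.comp_apply]
      ring
    have hlog : Tendsto (fun s ↦ log (1 + s)) (𝓝 0) (𝓝 0) := by
      simpa using
        (((continuous_const_add (1 : ℝ)).continuousAt (x := 0)).log (by norm_num)).tendsto
    exact hlog.comp (tendsto_exp_atBot.comp hexp)

lemma tendsto_mixEntropyDeficit_zero : Tendsto mixEntropyDeficit (𝓝 0) (𝓝 (log 2)) := by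
  simpa using tendsto_mixEntropyDeficit (l := 𝓝 0) (g := fun _ ↦ log 2) fun y ↦ by
    simpa [Function.comp_def, one_add_one_eq_two] using
      (continuous_log_one_add_exp.comp (Continuous.prodMk_left y)).tendsto 0

/-- The differential entropy of `X₀ * t + G` tends to `log 2 + (1/2) log (2 π e)` as `t → ∞`
and to `(1/2) log (2 π e)` as `t → 0⁺`. -/
theorem mixEntropy_limits :
    Filter.Tendsto mixEntropy Filter.atTop
      (nhds (Real.log 2 + (1 / 2) * Real.log (2 * Real.pi * Real.exp 1))) ∧
    Filter.Tendsto mixEntropy (nhdsWithin 0 (Set.Ioi 0))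
      (nhds ((1 / 2) * Real.log (2 * Real.pi * Real.exp 1))) := by
  set c := log 2 + 1 / 2 * log (2 * π * exp 1)
  rw [show mixEntropy = fun t ↦ c - mixEntropyDeficit t from funext mixEntropy_eq]
  constructor
  · simpa using tendsto_mixEntropyDeficit_atTop.const_sub c
  · simpa [c] using (tendsto_mixEntropyDeficit_zero.mono_left nhdsWithin_le_nhds).const_sub c
end
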